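/- Fix an integer m ≥ 1, set ℓ := ⌊m/2⌋ and μ_0 := 1, and let (μ_1, …, μ_m) ∈ ℝ^m be such that the Hankel matrix (μ_{i+j})_{0 ≤ i,j ≤ ℓ} is positive definite. Then for every ε > 0 there exists a continuous real-valued random variable Z (law absolutely continuous with respect to Lebesgue measure) such that |E[Z^k] − μ_k| < ε for every k ∈ {0, 1, …, m}. -/

import Mathlib

/-!
The moment vectors `(∫ x ^ k ∂ν)ₖ` of absolutely continuous probability laws `ν` form a convex
set whose closure contains the moment curve `t ↦ (t ^ k)ₖ` (take uniform laws on shrinking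
intervals around `t`), hence its closed convex hull. If `(μ k)ₖ` were outside that hull,
Hahn–Banach would give a polynomial of degree `≤ m`, nonnegative on `ℝ`, on which the Riesz
functional `L : X ^ k ↦ μ k` is negative. But a nonnegative real polynomial is a sum of two
squares of polynomials of degree `≤ m / 2`, and `L (p * p) ≥ 0` for those because `L (p * p)`
is the Hankel quadratic form evaluated at the coefficients of `p`.
-/

open MeasureTheory ProbabilityTheory Polynomial
open scoped Matrix

lemma Continuous.nonneg_of_forall_ne {f : ℝ → ℝ} (hf : Continuous f) {r : ℝ}
    (h : ∀ x ≠ r, 0 ≤ f x) (x : ℝ) : 0 ≤ f x := by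
  have hcl : closure ({r}ᶜ : Set ℝ) ⊆ {x | 0 ≤ f x} :=
    (isClosed_le continuous_const hf).closure_subset_iff.2 h
  rw [(dense_compl_singleton r).closure_eq] at hcl
  exact hcl (Set.mem_univ x)

namespace Polynomial

lemma isRoot_of_X_sub_C_mul_nonneg {Q : ℝ[X]} {r : ℝ}
    (hP : ∀ x, 0 ≤ ((X - C r) * Q).eval x) : Q.IsRoot r := by
  have hQ := fun s => (Q.continuous.tendsto r).mono_left (nhdsWithin_le_nhds (s := s))
  have hright : 0 ≤ Q.eval r := ge_of_tendsto (hQ (Set.Ioi r)) <|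
    eventually_nhdsWithin_of_forall fun x (hx : r < x) => by
      have hPx := hP x
      rw [eval_mul, eval_sub, eval_X, eval_C] at hPx
      exact nonneg_of_mul_nonneg_right hPx (sub_pos.2 hx)
  have hleft : Q.eval r ≤ 0 := le_of_tendsto (hQ (Set.Iio r)) <|
    eventually_nhdsWithin_of_forall fun x (hx : x < r) => by
      have hPx := hP x
      rw [eval_mul, eval_sub, eval_X, eval_C] at hPx
      exact nonpos_of_mul_nonneg_right hPx (sub_neg.2 hx)
  exact le_antisymm hleft hright

lemma exists_eq_X_sub_C_sq_mul_of_nonneg {P : ℝ[X]} (hP : ∀ x, 0 ≤ P.eval x) {r : ℝ}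
    (hr : P.IsRoot r) :
    ∃ Q : ℝ[X], P = (X - C r) ^ 2 * Q ∧ ∀ x, 0 ≤ Q.eval x := by
  set Q₁ := P /ₘ (X - C r)
  have hP₁ : (X - C r) * Q₁ = P := mul_divByMonic_eq_iff_isRoot.2 hr
  have hQ₁ : Q₁.IsRoot r := isRoot_of_X_sub_C_mul_nonneg (hP₁ ▸ hP)
  have hfac : P = (X - C r) ^ 2 * (Q₁ /ₘ (X - C r)) := by
    rw [← hP₁]; nth_rw 1 [← mul_divByMonic_eq_iff_isRoot.2 hQ₁]; ring
  refine ⟨Q₁ /ₘ (X - C r), hfac,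
    (Polynomial.continuous _).nonneg_of_forall_ne (r := r) fun x hx => ?_⟩
  have hPx := hP x
  rw [hfac, eval_mul, eval_pow, eval_sub, eval_X, eval_C] at hPx
  exact nonneg_of_mul_nonneg_right hPx (sq_pos_of_ne_zero (sub_ne_zero.2 hx))

lemma exists_eq_quadratic_mul_of_nonneg {P : ℝ[X]} (hP : ∀ x, 0 ≤ P.eval x)
    (hdeg : 0 < P.natDegree) :
    ∃ (a b : ℝ) (Q : ℝ[X]), P = ((X - C a) ^ 2 + C b ^ 2) * Q ∧ ∀ x, 0 ≤ Q.eval x := by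
  by_cases hroot : ∃ r, P.IsRoot r
  · obtain ⟨r, hr⟩ := hroot
    obtain ⟨Q, hPQ, hQ⟩ := exists_eq_X_sub_C_sq_mul_of_nonneg hP hr
    exact ⟨r, 0, Q, by simpa using hPQ, hQ⟩
  push Not at hroot
  obtain ⟨z, hz⟩ : ∃ z : ℂ, aeval z P = 0 :=
    IsAlgClosed.exists_aeval_eq_zero ℂ P (natDegree_pos_iff_degree_pos.1 hdeg).ne'
  have him : z.im ≠ 0 := by
    intro him
    rw [← Complex.re_add_im z, him, Complex.ofReal_zero, zero_mul, add_zero,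
      ← Complex.coe_algebraMap, aeval_algebraMap_apply, map_eq_zero] at hz
    exact hroot z.re hz
  obtain ⟨Q, hPQ⟩ := P.quadratic_dvd_of_aeval_eq_zero_im_ne_zero hz him
  have hq : X ^ 2 - C (2 * z.re) * X + C (‖z‖ ^ 2) = (X - C z.re) ^ 2 + C z.im ^ 2 := by
    rw [Complex.sq_norm, Complex.normSq_apply]
    simp only [C_add, C_mul, C_ofNat]
    ring
  rw [hq] at hPQ
  refine ⟨z.re, z.im, Q, hPQ, fun x => ?_⟩
  have hPx := hP x
  rw [hPQ, eval_mul] at hPx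
  refine nonneg_of_mul_nonneg_right hPx ?_
  simp only [eval_add, eval_pow, eval_sub, eval_X, eval_C]
  positivity

lemma natDegree_quadratic_mul (a b : ℝ) {Q : ℝ[X]} (hQ : Q ≠ 0) :
    (((X - C a) ^ 2 + C b ^ 2) * Q).natDegree = Q.natDegree + 2 := by
  have hmonic : ((X - C a) ^ 2 + C b ^ 2).Monic := by monicity!
  rw [hmonic.natDegree_mul' hQ, add_comm]
  congr
  compute_degree!

lemma natDegree_X_sub_C_mul_add_C_mul_le {a b : ℝ} {c d : ℝ[X]} {n : ℕ}
    (hc : c.natDegree ≤ n) (hd : d.natDegree ≤ n) :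
    ((X - C a) * c + C b * d).natDegree ≤ n + 1 :=
  natDegree_add_le_of_degree_le
    ((natDegree_mul_le_of_le (natDegree_X_sub_C_le a) hc).trans (by omega))
    ((natDegree_mul_le_of_le (natDegree_C b).le hd).trans (by omega))

theorem exists_eq_sq_add_sq_of_nonneg {n : ℕ} {P : ℝ[X]} (hdeg : P.natDegree ≤ 2 * n + 1)
    (hP : ∀ x, 0 ≤ P.eval x) :
    ∃ a b : ℝ[X], P = a ^ 2 + b ^ 2 ∧ a.natDegree ≤ n ∧ b.natDegree ≤ n := by
  rcases P.natDegree.eq_zero_or_pos with h0 | hpos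
  · rw [eq_C_of_natDegree_eq_zero h0] at hP ⊢
    have hc : 0 ≤ P.coeff 0 := by simpa using hP 0
    exact ⟨C √(P.coeff 0), 0, by simp [← C_pow, Real.sq_sqrt hc], by simp, by simp⟩
  obtain ⟨a, b, Q, rfl, hQ⟩ := exists_eq_quadratic_mul_of_nonneg hP hpos
  have hQ0 : Q ≠ 0 := by rintro rfl; simp at hpos
  rw [natDegree_quadratic_mul a b hQ0] at hdeg
  obtain ⟨n, rfl⟩ := Nat.exists_eq_add_one_of_ne_zero (by omega : n ≠ 0)
  obtain ⟨c, d, rfl, hc, hd⟩ := exists_eq_sq_add_sq_of_nonneg (n := n) (by omega) hQ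
  -- (a² + b²)(c² + d²) = (ac - bd)² + (ad + bc)²
  refine ⟨(X - C a) * c + C (-b) * d, (X - C a) * d + C b * c, ?_,
    natDegree_X_sub_C_mul_add_C_mul_le hc hd, natDegree_X_sub_C_mul_add_C_mul_le hd hc⟩
  simp only [C_neg]
  ring
termination_by n

end Polynomial

def momentFunctional (μ : ℕ → ℝ) : ℝ[X] →ₗ[ℝ] ℝ :=
  Polynomial.lsum fun k => μ k • LinearMap.id

lemma momentFunctional_C_mul_X_pow (μ : ℕ → ℝ) (a : ℝ) (k : ℕ) :
    momentFunctional μ (C a * X ^ k) = a * μ k := by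
  rw [momentFunctional, lsum_apply, C_mul_X_pow_eq_monomial, sum_monomial_index] <;> simp [mul_comm]

lemma momentFunctional_C (μ : ℕ → ℝ) (a : ℝ) : momentFunctional μ (C a) = a * μ 0 := by
  simpa using momentFunctional_C_mul_X_pow μ a 0

lemma momentFunctional_pow_eq_eval (t : ℝ) (P : ℝ[X]) :
    momentFunctional (t ^ ·) P = P.eval t := by
  rw [P.as_sum_range_C_mul_X_pow, map_sum, eval_finsetSum]
  simp only [momentFunctional_C_mul_X_pow, eval_mul, eval_C, eval_pow, eval_X]

def hankel (μ : ℕ → ℝ) (n : ℕ) : Matrix (Fin (n + 1)) (Fin (n + 1)) ℝ :=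
  Matrix.of fun i j => μ (i + j)

lemma momentFunctional_mul_self (μ : ℕ → ℝ) {n : ℕ} {p : ℝ[X]} (hp : p.natDegree ≤ n) :
    momentFunctional μ (p * p) =
      (fun i : Fin (n + 1) => p.coeff i) ⬝ᵥ hankel μ n *ᵥ fun i => p.coeff i := by
  have hsum : p = ∑ i : Fin (n + 1), C (p.coeff i) * X ^ (i : ℕ) := by
    rw [Fin.sum_univ_eq_sum_range (fun i => C (p.coeff i) * X ^ i)]
    exact p.as_sum_range_C_mul_X_pow' (by omega)
  conv_lhs => rw [hsum, Finset.sum_mul_sum, map_sum]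
  simp only [dotProduct, Matrix.mulVec, hankel, Matrix.of_apply, Finset.mul_sum, map_sum]
  refine Finset.sum_congr rfl fun i _ => Finset.sum_congr rfl fun j _ => ?_
  rw [mul_mul_mul_comm, ← C_mul, ← pow_add, momentFunctional_C_mul_X_pow]
  ring

lemma Matrix.PosSemidef.momentFunctional_mul_self_nonneg {μ : ℕ → ℝ} {n : ℕ}
    (h : (hankel μ n).PosSemidef) {p : ℝ[X]} (hp : p.natDegree ≤ n) :
    0 ≤ momentFunctional μ (p * p) := by
  rw [momentFunctional_mul_self μ hp]
  simpa using h.dotProduct_mulVec_nonneg fun i : Fin (n + 1) => p.coeff i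

lemma Matrix.PosSemidef.momentFunctional_nonneg {μ : ℕ → ℝ} {n : ℕ}
    (h : (hankel μ n).PosSemidef) {P : ℝ[X]} (hdeg : P.natDegree ≤ 2 * n + 1)
    (hP : ∀ x, 0 ≤ P.eval x) : 0 ≤ momentFunctional μ P := by
  obtain ⟨a, b, rfl, ha, hb⟩ := exists_eq_sq_add_sq_of_nonneg hdeg hP
  rw [map_add, sq, sq]
  exact add_nonneg (h.momentFunctional_mul_self_nonneg ha) (h.momentFunctional_mul_self_nonneg hb)

lemma exists_momentFunctional_eq {m : ℕ} (f : (Fin (m + 1) → ℝ) →ₗ[ℝ] ℝ) :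
    ∃ P : ℝ[X], P.natDegree ≤ m ∧ ∀ μ : ℕ → ℝ, momentFunctional μ P = f fun k => μ k := by
  refine ⟨∑ k : Fin (m + 1), C (f fun j => if k = j then 1 else 0) * X ^ (k : ℕ), ?_, fun μ => ?_⟩
  · exact natDegree_sum_le_of_forall_le _ _ fun k _ =>
      (natDegree_C_mul_X_pow_le _ _).trans (Nat.lt_succ_iff.1 k.isLt)
  · rw [map_sum, f.pi_apply_eq_sum_univ]
    simp only [momentFunctional_C_mul_X_pow, smul_eq_mul]
    exact Finset.sum_congr rfl fun k _ => mul_comm _ _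

def momentCurve (m : ℕ) (t : ℝ) : Fin (m + 1) → ℝ := fun k => t ^ (k : ℕ)

lemma continuous_momentCurve (m : ℕ) : Continuous (momentCurve m) :=
  continuous_pi fun _ => continuous_pow _

theorem Matrix.PosSemidef.mem_closedConvexHull_range_momentCurve {μ : ℕ → ℝ} {n m : ℕ}
    (h : (hankel μ n).PosSemidef) (hμ0 : μ 0 = 1) (hm : m ≤ 2 * n + 1) :
    (fun k : Fin (m + 1) => μ k) ∈ closedConvexHull ℝ (Set.range (momentCurve m)) := by
  by_contra hμ
  obtain ⟨f, u, hfu, huf⟩ :=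
    geometric_hahn_banach_closed_point convex_closedConvexHull isClosed_closedConvexHull hμ
  obtain ⟨P, hPdeg, hP⟩ := exists_momentFunctional_eq f.toLinearMap
  have hnonneg : 0 ≤ momentFunctional μ (C u - P) := by
    refine h.momentFunctional_nonneg ((natDegree_sub_le _ _).trans (by simp; omega)) fun t => ?_
    have hft := hfu _ (subset_closedConvexHull ⟨t, rfl⟩)
    rw [← momentFunctional_pow_eq_eval, map_sub, momentFunctional_C, hP]
    simp only [pow_zero, mul_one, sub_nonneg]
    exact hft.le
  rw [map_sub, momentFunctional_C, hμ0, hP] at hnonneg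
  simp only [mul_one, sub_nonneg] at hnonneg
  exact absurd huf (not_lt.2 hnonneg)

section Expectations

variable {α E : Type*} [MeasurableSpace α] [NormedAddCommGroup E] [NormedSpace ℝ E]

def absContExpectations (ρ : Measure α) (g : α → E) : Set E :=
  {v | ∃ ν : Measure α, IsProbabilityMeasure ν ∧ ν ≪ ρ ∧ Integrable g ν ∧ ∫ x, g x ∂ν = v}

lemma convex_absContExpectations (ρ : Measure α) (g : α → E) :
    Convex ℝ (absContExpectations ρ g) := by
  rintro _ ⟨ν₁, hν₁, hac₁, hg₁, rfl⟩ _ ⟨ν₂, hν₂, hac₂, hg₂, rfl⟩ a b ha hb hab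
  have hg₁' := hg₁.smul_measure (ENNReal.ofReal_ne_top (r := a))
  have hg₂' := hg₂.smul_measure (ENNReal.ofReal_ne_top (r := b))
  refine ⟨ENNReal.ofReal a • ν₁ + ENNReal.ofReal b • ν₂, ⟨?_⟩, ?_, hg₁'.add_measure hg₂', ?_⟩
  · simp [← ENNReal.ofReal_add ha hb, hab]
  · exact (hac₁.smul_left _).add_left (hac₂.smul_left _)
  · rw [integral_add_measure hg₁' hg₂', integral_smul_measure, integral_smul_measure,
      ENNReal.toReal_ofReal ha, ENNReal.toReal_ofReal hb]

lemma dist_integral_le_of_ae_dist_le [CompleteSpace E] {ν : Measure α} [IsProbabilityMeasure ν]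
    {g : α → E} (hg : Integrable g ν) {c : E} {C : ℝ} (h : ∀ᵐ x ∂ν, dist (g x) c ≤ C) :
    dist (∫ x, g x ∂ν) c ≤ C := by
  have hsub : ∫ x, g x ∂ν - c = ∫ x, (g x - c) ∂ν := by
    rw [integral_sub hg (integrable_const c), integral_const, probReal_univ, one_smul]
  have hnorm := norm_integral_le_of_norm_le_const (by simpa only [dist_eq_norm] using h)
  rwa [probReal_univ, mul_one, ← hsub, ← dist_eq_norm] at hnorm

end Expectations

lemma Continuous.mem_closure_absContExpectations {E : Type*} [NormedAddCommGroup E]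
    [NormedSpace ℝ E] [CompleteSpace E] {g : ℝ → E} (hg : Continuous g) (t : ℝ) :
    g t ∈ closure (absContExpectations volume g) := by
  refine Metric.mem_closure_iff.2 fun ε hε => ?_
  obtain ⟨δ, hδ, hclose⟩ := Metric.continuous_iff.1 hg t (ε / 2) (half_pos hε)
  set s := Set.Icc (t - δ / 2) (t + δ / 2)
  have hs : volume s ≠ 0 := by simp [s, Real.volume_Icc]; linarith
  have : IsProbabilityMeasure (volume[|s]) := cond_isProbabilityMeasure_of_finite hs (by simp [s])
  have hint : Integrable g (volume[|s]) :=
    (hg.integrableOn_Icc).smul_measure (ENNReal.inv_ne_top.2 hs)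
  refine ⟨_, ⟨volume[|s], this, cond_absolutelyContinuous, hint, rfl⟩, ?_⟩
  rw [dist_comm]
  refine (dist_integral_le_of_ae_dist_le hint ?_).trans_lt (half_lt_self hε)
  filter_upwards [ae_cond_mem measurableSet_Icc] with x hx
  refine (hclose x ?_).le
  rw [Real.dist_eq, abs_lt]
  constructor <;> linarith [hx.1, hx.2]

theorem exists_continuous_rv_approx_moments_general
    (m : ℕ) (μ : ℕ → ℝ) (hμ0 : μ 0 = 1)
    (hpos : (Matrix.of fun i j : Fin (m / 2 + 1) => μ ((i : ℕ) + (j : ℕ))).PosDef) :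
    ∀ ε : ℝ, 0 < ε → ∃ ν : Measure ℝ, IsProbabilityMeasure ν ∧
      ν ≪ MeasureTheory.volume ∧
      ∀ k ≤ m, |(∫ x, x ^ k ∂ν) - μ k| < ε := by
  intro ε hε
  have hμ :
      (fun k : Fin (m + 1) => μ k) ∈ closure (absContExpectations volume (momentCurve m)) :=
    closedConvexHull_min
      (Set.range_subset_iff.2 (continuous_momentCurve m).mem_closure_absContExpectations)
      (convex_absContExpectations _ _).closure isClosed_closure
      (hpos.posSemidef.mem_closedConvexHull_range_momentCurve (n := m / 2) hμ0 (by omega))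
  obtain ⟨_, ⟨ν, hν, hac, hint, rfl⟩, hdist⟩ := Metric.mem_closure_iff.1 hμ ε hε
  refine ⟨ν, hν, hac, fun k hk => ?_⟩
  have hk := (dist_le_pi_dist _ _ (⟨k, by omega⟩ : Fin (m + 1))).trans_lt hdist
  rwa [eval_integral hint.eval, Real.dist_eq, abs_sub_comm] at hk

/-- Let `m ≥ 1`, `ℓ = ⌊m/2⌋`, and `μ : ℕ → ℝ` with `μ 0 = 1` whose Hankel
matrix `(μ_{i+j})_{0 ≤ i,j ≤ ℓ}` is positive definite. Then for every `ε > 0` there is a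
continuous real random variable (a probability law on `ℝ` absolutely continuous w.r.t.
Lebesgue measure) whose `k`-th moment is within `ε` of `μ k` for all `k ≤ m`. -/
theorem exists_continuous_rv_approx_moments
    (m : ℕ) (hm : 1 ≤ m) (μ : ℕ → ℝ) (hμ0 : μ 0 = 1)
    (hpos : (Matrix.of fun i j : Fin (m / 2 + 1) => μ ((i : ℕ) + (j : ℕ))).PosDef) :
    ∀ ε : ℝ, 0 < ε → ∃ ν : Measure ℝ, IsProbabilityMeasure ν ∧
      ν ≪ MeasureTheory.volume ∧
      ∀ k ≤ m, |(∫ x, x ^ k ∂ν) - μ k| < ε :=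
  exists_continuous_rv_approx_moments_general m μ hμ0 hpos
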